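/- Let A and B be Archimedean semiprime f-algebras with point separating order duals and with weak order units e_A and e_B respectively, and let T : A → B be a weak Markov operator that is a lattice homomorphism. Then for every weak Markov operator S : A → B and every real α > 0 with αT − S ≥ 0 (i.e. αT − S is a positive operator), one has S = T. -/

import Mathlib

/-!
A lattice homomorphism commutes with positive parts, so `S ≤ α T` upgrades to
`(S b)⁺ ≤ α (T b)⁺` for every `b`. For `a ≥ 0` and `b = a - t e_A` this says that, for every
`t > 0`, "`S a > t e_B`" and "`T a < t e_B`" are disjoint. Discretising `t` and using the
Archimedean property, `(S a - T a)⁺` is disjoint from `e_B`, hence zero because `e_B` is a weak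
order unit; symmetrically `(T a - S a)⁺ = 0`, and positive elements span `A`.
-/

section LatticeOrderedAddCommGroup

variable {G : Type*} [AddCommGroup G] [Lattice G] {x y z : G}

lemma inf_eq_zero_of_le (h : x ⊓ y = 0) (hz : 0 ≤ z) (hzx : z ≤ x) : z ⊓ y = 0 :=
  le_antisymm ((inf_le_inf_right y hzx).trans h.le) (le_inf hz (h ▸ inf_le_right))

variable [AddLeftMono G]

lemma add_inf_le_inf_add_inf (hx : 0 ≤ x) (hy : 0 ≤ y) (hz : 0 ≤ z) :
    (x + y) ⊓ z ≤ x ⊓ z + y ⊓ z := by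
  rw [add_inf, inf_add, inf_add]
  refine le_inf (le_inf inf_le_left ?_) (le_inf ?_ ?_)
  · exact inf_le_right.trans (le_add_of_nonneg_right hy)
  · exact inf_le_right.trans (le_add_of_nonneg_left hx)
  · exact inf_le_right.trans (le_add_of_nonneg_left hz)

lemma add_inf_eq_zero (hx : x ⊓ z = 0) (hy : y ⊓ z = 0) : (x + y) ⊓ z = 0 := by
  have hx0 : 0 ≤ x := hx ▸ inf_le_left
  have hy0 : 0 ≤ y := hy ▸ inf_le_left
  have hz0 : 0 ≤ z := hx ▸ inf_le_right
  refine le_antisymm ?_ (le_inf (add_nonneg hx0 hy0) hz0)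
  calc (x + y) ⊓ z ≤ x ⊓ z + y ⊓ z := add_inf_le_inf_add_inf hx0 hy0 hz0
    _ = 0 := by rw [hx, hy, add_zero]

lemma nsmul_inf_eq_zero (h : x ⊓ y = 0) : ∀ n : ℕ, (n • x) ⊓ y = 0
  | 0 => by rw [zero_smul]; exact inf_eq_left.mpr (h ▸ inf_le_right)
  | n + 1 => by rw [succ_nsmul]; exact add_inf_eq_zero (nsmul_inf_eq_zero h n) h

lemma posPart_add_le_posPart_add_posPart (x y : G) : (x + y)⁺ ≤ x⁺ + y⁺ :=
  sup_le (add_le_add (le_posPart x) (le_posPart y))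
    (add_nonneg (posPart_nonneg x) (posPart_nonneg y))

lemma posPart_sub_self (x : G) : x⁺ - x = x⁻ := by
  have h := sub_sub_cancel x⁺ x⁻
  rwa [posPart_sub_negPart] at h

end LatticeOrderedAddCommGroup

section RealVectorLattice

variable {V : Type*} [AddCommGroup V] [Lattice V] [Module ℝ V] {u v e w x y z : V}

lemma le_zero_of_forall_le_smul [PosSMulMono ℝ V]
    (harch : ∀ x y : V, (∀ n : ℕ, n • x ≤ y) → x ≤ 0)
    (he : 0 ≤ e) (h : ∀ ε : ℝ, 0 < ε → x ≤ ε • e) : x ≤ 0 := by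
  refine harch x e fun n => ?_
  rcases n.eq_zero_or_pos with rfl | hn
  · simpa using he
  have hn' : (0 : ℝ) < n := Nat.cast_pos.2 hn
  calc n • x = (n : ℝ) • x := (Nat.cast_smul_eq_nsmul ℝ n x).symm
    _ ≤ (n : ℝ) • ((n : ℝ)⁻¹ • e) := smul_le_smul_of_nonneg_left (h _ (inv_pos.2 hn')) hn'.le
    _ = e := by rw [smul_smul, mul_inv_cancel₀ hn'.ne', one_smul]

variable [AddLeftMono V]

/-- Read `(u - t • e)⁺ ⊓ (t • e - v)⁺ = 0` as "`u > t e` and `v < t e` never happen together".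
Stepping `t` through the grid `k ε`, this gives that `u > v + ε e` and `v < k ε e` never
happen together either. -/
lemma posPart_sub_sub_smul_inf_eq_zero (hv : 0 ≤ v)
    (hD : ∀ t : ℝ, 0 < t → (u - t • e)⁺ ⊓ (t • e - v)⁺ = 0) {ε : ℝ} (hε : 0 < ε) :
    ∀ k : ℕ, (u - v - ε • e)⁺ ⊓ ((k * ε) • e - v)⁺ = 0
  | 0 => by simp [posPart_eq_zero.2 (neg_nonpos.2 hv)]
  | k + 1 => by
    set t : ℝ := ((k + 1 : ℕ) : ℝ) * ε
    set m := (u - v - ε • e)⁺ ⊓ (t • e - v)⁺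
    have hm : 0 ≤ m := le_inf (posPart_nonneg _) (posPart_nonneg _)
    have hsplit : (u - v - ε • e)⁺ ≤ (u - t • e)⁺ + ((k * ε) • e - v)⁺ := by
      calc (u - v - ε • e)⁺ = ((u - t • e) + ((k * ε) • e - v))⁺ := by
            congr 1; simp only [t]; push_cast; rw [add_mul, one_mul, add_smul]; abel
        _ ≤ _ := posPart_add_le_posPart_add_posPart _ _
    have h₁ : m ⊓ (u - t • e)⁺ = 0 :=
      inf_eq_zero_of_le (by rw [inf_comm]; exact hD t (by positivity)) hm inf_le_right
    have h₂ : m ⊓ ((k * ε) • e - v)⁺ = 0 :=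
      inf_eq_zero_of_le (posPart_sub_sub_smul_inf_eq_zero hv hD hε k) hm inf_le_left
    have hsum : ((u - t • e)⁺ + ((k * ε) • e - v)⁺) ⊓ m = 0 := by
      rw [inf_comm] at h₁ h₂
      exact add_inf_eq_zero h₁ h₂
    rwa [inf_eq_right.2 (inf_le_left.trans hsplit)] at hsum

variable [PosSMulMono ℝ V]

lemma inf_eq_zero_of_le_smul (h : x ⊓ y = 0) (hz : 0 ≤ z) {c : ℝ} (hzx : z ≤ c • x) :
    z ⊓ y = 0 := by
  have hceil : c • x ≤ ⌈c⌉₊ • x := by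
    have h := smul_nonneg (sub_nonneg.2 (Nat.le_ceil c)) (h ▸ inf_le_left : 0 ≤ x)
    rwa [sub_smul, Nat.cast_smul_eq_nsmul, sub_nonneg] at h
  exact inf_eq_zero_of_le (nsmul_inf_eq_zero h _) hz (hzx.trans hceil)

lemma posPart_inf_posPart_neg_eq_zero_of_le_smul {c : ℝ} (h : x⁺ ≤ c • y⁺) :
    x⁺ ⊓ (-y)⁺ = 0 := by
  rw [posPart_neg]
  exact inf_eq_zero_of_le_smul (posPart_inf_negPart_eq_zero y) (posPart_nonneg x) h

lemma smul_le_of_inf_posPart_smul_sub_eq_zero (hw : 0 ≤ w) (hwe : w ≤ e) (hv : 0 ≤ v)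
    {s : ℝ} (hs : 0 ≤ s) (h : w ⊓ (s • e - v)⁺ = 0) : s • w ≤ v := by
  have hq : w ⊓ (s • w - v)⁺ = 0 := by
    rw [inf_comm] at h ⊢
    exact inf_eq_zero_of_le h (posPart_nonneg _)
      (posPart_mono (sub_le_sub_right (smul_le_smul_of_nonneg_left hwe hs) v))
  have hsq : (s • w) ⊓ (s • w - v)⁺ = 0 := inf_eq_zero_of_le_smul hq (smul_nonneg hs hw) le_rfl
  have hqle : (s • w - v)⁺ ≤ s • w := sup_le (sub_le_self _ hv) (smul_nonneg hs hw)
  rwa [inf_eq_right.2 hqle, posPart_eq_zero, sub_nonpos] at hsq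

lemma posPart_sub_inf_eq_zero (harch : ∀ x y : V, (∀ n : ℕ, n • x ≤ y) → x ≤ 0)
    (he : 0 ≤ e) (hv : 0 ≤ v) (hD : ∀ t : ℝ, 0 < t → (u - t • e)⁺ ⊓ (t • e - v)⁺ = 0) :
    (u - v)⁺ ⊓ e = 0 := by
  refine le_antisymm (le_zero_of_forall_le_smul harch he fun ε hε => ?_)
    (le_inf (posPart_nonneg _) he)
  have hεe : 0 ≤ ε • e := smul_nonneg hε.le he
  set w := (u - v - ε • e)⁺ ⊓ e
  have hw : 0 ≤ w := le_inf (posPart_nonneg _) he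
  have hmul : ∀ k : ℕ, k • (ε • w) ≤ v := fun k => by
    rw [← Nat.cast_smul_eq_nsmul ℝ, smul_smul]
    exact smul_le_of_inf_posPart_smul_sub_eq_zero hw inf_le_right hv (by positivity)
      (inf_eq_zero_of_le (posPart_sub_sub_smul_inf_eq_zero hv hD hε k) hw inf_le_left)
  have hw0 : w = 0 := by
    refine le_antisymm ?_ hw
    calc w = ε⁻¹ • (ε • w) := by rw [smul_smul, inv_mul_cancel₀ hε.ne', one_smul]
      _ ≤ 0 := smul_nonpos_of_nonneg_of_nonpos (inv_nonneg.2 hε.le) (harch _ v hmul)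
  calc (u - v)⁺ ⊓ e ≤ ((u - v - ε • e)⁺ + ε • e) ⊓ e := by
        refine inf_le_inf_right e ?_
        simpa [posPart_eq_self.2 hεe] using
          posPart_add_le_posPart_add_posPart (u - v - ε • e) (ε • e)
    _ ≤ w + (ε • e) ⊓ e := add_inf_le_inf_add_inf (posPart_nonneg _) hεe he
    _ ≤ ε • e := by rw [hw0, zero_add]; exact inf_le_left

lemma le_of_forall_posPart_inf_posPart_eq_zero
    (harch : ∀ x y : V, (∀ n : ℕ, n • x ≤ y) → x ≤ 0) (hwou : ∀ x : V, |x| ⊓ e = 0 → x = 0)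
    (he : 0 ≤ e) (hv : 0 ≤ v) (hD : ∀ t : ℝ, 0 < t → (u - t • e)⁺ ⊓ (t • e - v)⁺ = 0) :
    u ≤ v := by
  have h : (u - v)⁺ = 0 := hwou _ <| by
    rw [abs_of_nonneg (posPart_nonneg _)]
    exact posPart_sub_inf_eq_zero harch he hv hD
  exact sub_nonpos.1 (posPart_eq_zero.1 h)

end RealVectorLattice

namespace LinearMap

variable {A B : Type*} [AddCommGroup A] [Lattice A] [AddLeftMono A] [Module ℝ A]
  [AddCommGroup B] [Module ℝ B]

lemma ext_of_nonneg {S T : A →ₗ[ℝ] B} (h : ∀ a, 0 ≤ a → S a = T a) : S = T := by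
  ext a
  rw [← posPart_sub_negPart a, map_sub, map_sub, h _ (posPart_nonneg a), h _ (negPart_nonneg a)]

variable [Lattice B] [AddLeftMono B]

lemma map_posPart_of_map_abs {T : A →ₗ[ℝ] B} (hT : ∀ a, T |a| = |T a|) (a : A) :
    T a⁺ = (T a)⁺ := by
  have h : (2 : ℕ) • T a⁺ = (2 : ℕ) • (T a)⁺ := by
    rw [← map_nsmul, ← add_abs_eq_two_nsmul_posPart, ← add_abs_eq_two_nsmul_posPart, map_add, hT]
  rw [← Nat.cast_smul_eq_nsmul ℝ, ← Nat.cast_smul_eq_nsmul ℝ] at h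
  exact smul_right_injective B (by norm_num) h

lemma posPart_map_le_map_posPart {S : A →ₗ[ℝ] B} (hS : ∀ a, 0 ≤ a → 0 ≤ S a) (a : A) :
    (S a)⁺ ≤ S a⁺ :=
  sup_le (sub_nonneg.1 (by rw [← map_sub, posPart_sub_self]; exact hS _ (negPart_nonneg a)))
    (hS _ (posPart_nonneg a))

end LinearMap

theorem stmt_14_general
    {A B : Type*}
    [Ring A] [Lattice A] [Algebra ℝ A] [CovariantClass A A (· + ·) (· ≤ ·)]
    [Ring B] [Lattice B] [Algebra ℝ B] [CovariantClass B B (· + ·) (· ≤ ·)]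
    -- B is a Riesz space (vector lattice) over ℝ
    (hsmulB : ∀ (r : ℝ) (x : B), 0 ≤ r → 0 ≤ x → 0 ≤ r • x)
    -- B is Archimedean
    (harchB : ∀ x y : B, (∀ n : ℕ, n • x ≤ y) → x ≤ 0)
    (eA : A) (eB : B)
    -- eB is a weak order unit of B
    (heBpos : 0 < eB) (heBwou : ∀ x : B, |x| ⊓ eB = 0 → x = 0)
    (T : A →ₗ[ℝ] B)
    -- T is a weak Markov operator
    (hTpos : ∀ a : A, 0 ≤ a → 0 ≤ T a) (hTe : T eA = eB)
    -- T is a lattice homomorphism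
    (hlat : ∀ a : A, T |a| = |T a|)
    (S : A →ₗ[ℝ] B)
    -- S is a weak Markov operator
    (hSpos : ∀ a : A, 0 ≤ a → 0 ≤ S a) (hSe : S eA = eB)
    (α : ℝ)
    -- α • T - S is a positive operator
    (hdiff : ∀ a : A, 0 ≤ a → 0 ≤ (α • T - S) a) :
    S = T := by
  have : IsOrderedAddMonoid B :=
    ⟨fun _ _ h c => add_le_add_left h c, fun _ _ h c => add_le_add_right h c⟩
  have : PosSMulMono ℝ B := PosSMulMono.of_smul_nonneg fun r hr x hx => hsmulB r x hr hx
  have hdom : ∀ b, (S b)⁺ ≤ α • (T b)⁺ := fun b =>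
    calc (S b)⁺ ≤ S b⁺ := S.posPart_map_le_map_posPart hSpos b
      _ ≤ α • T b⁺ := by simpa [sub_nonneg] using hdiff _ (posPart_nonneg b)
      _ = α • (T b)⁺ := by rw [T.map_posPart_of_map_abs hlat]
  have hdom_sub : ∀ a (t : ℝ), (S a - t • eB)⁺ ≤ α • (T a - t • eB)⁺ ∧
      (t • eB - S a)⁺ ≤ α • (t • eB - T a)⁺ := fun a t => by
    simpa [hSe, hTe] using And.intro (hdom (a - t • eA)) (hdom (t • eA - a))
  refine LinearMap.ext_of_nonneg fun a ha => le_antisymm ?_ ?_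
  · refine le_of_forall_posPart_inf_posPart_eq_zero harchB heBwou heBpos.le (hTpos a ha)
      fun t _ => ?_
    simpa using posPart_inf_posPart_neg_eq_zero_of_le_smul (hdom_sub a t).1
  · refine le_of_forall_posPart_inf_posPart_eq_zero harchB heBwou heBpos.le (hSpos a ha)
      fun t _ => ?_
    simpa [inf_comm] using posPart_inf_posPart_neg_eq_zero_of_le_smul (hdom_sub a t).2

/-- Let `T` be a weak Markov operator between Archimedean semiprime
`f`-algebras with point separating order duals and weak order units `e_A`,
`e_B`, and assume `T` is a lattice homomorphism. Then for every weak Markov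
operator `S` and every real `α > 0` such that `α • T - S` is positive, one has
`S = T`. -/
theorem stmt_14
    {A B : Type*}
    [Ring A] [Lattice A] [Algebra ℝ A] [CovariantClass A A (· + ·) (· ≤ ·)]
    -- A is a Riesz space (vector lattice) over ℝ
    (hsmulA : ∀ (r : ℝ) (x : A), 0 ≤ r → 0 ≤ x → 0 ≤ r • x)
    -- A is a lattice-ordered algebra
    (hmulA : ∀ x y : A, 0 ≤ x → 0 ≤ y → 0 ≤ x * y)
    -- the f-algebra condition
    (hfA : ∀ x y z : A, 0 ≤ z → x ⊓ y = 0 → (x * z) ⊓ y = 0 ∧ (z * x) ⊓ y = 0)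
    -- A is Archimedean
    (harchA : ∀ x y : A, (∀ n : ℕ, n • x ≤ y) → x ≤ 0)
    -- the order dual of A separates the points of A
    (hsepA : ∀ x : A, x ≠ 0 → ∃ f : A →ₗ[ℝ] ℝ, Monotone f ∧ f x ≠ 0)
    -- A is semiprime
    (hsemiA : ∀ x : A, x * x = 0 → x = 0)
    [Ring B] [Lattice B] [Algebra ℝ B] [CovariantClass B B (· + ·) (· ≤ ·)]
    -- B is a Riesz space (vector lattice) over ℝ
    (hsmulB : ∀ (r : ℝ) (x : B), 0 ≤ r → 0 ≤ x → 0 ≤ r • x)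
    -- B is a lattice-ordered algebra
    (hmulB : ∀ x y : B, 0 ≤ x → 0 ≤ y → 0 ≤ x * y)
    -- the f-algebra condition
    (hfB : ∀ x y z : B, 0 ≤ z → x ⊓ y = 0 → (x * z) ⊓ y = 0 ∧ (z * x) ⊓ y = 0)
    -- B is Archimedean
    (harchB : ∀ x y : B, (∀ n : ℕ, n • x ≤ y) → x ≤ 0)
    -- the order dual of B separates the points of B
    (hsepB : ∀ x : B, x ≠ 0 → ∃ f : B →ₗ[ℝ] ℝ, Monotone f ∧ f x ≠ 0)
    -- B is semiprime
    (hsemiB : ∀ x : B, x * x = 0 → x = 0)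
    (eA : A) (eB : B)
    -- eA is a weak order unit of A
    (heApos : 0 < eA) (heAwou : ∀ x : A, |x| ⊓ eA = 0 → x = 0)
    -- eB is a weak order unit of B
    (heBpos : 0 < eB) (heBwou : ∀ x : B, |x| ⊓ eB = 0 → x = 0)
    (T : A →ₗ[ℝ] B)
    -- T is a weak Markov operator
    (hTpos : ∀ a : A, 0 ≤ a → 0 ≤ T a) (hTe : T eA = eB)
    -- T is a lattice homomorphism
    (hlat : ∀ a : A, T |a| = |T a|)
    (S : A →ₗ[ℝ] B)
    -- S is a weak Markov operator
    (hSpos : ∀ a : A, 0 ≤ a → 0 ≤ S a) (hSe : S eA = eB)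
    (α : ℝ) (hα : 0 < α)
    -- α • T - S is a positive operator
    (hdiff : ∀ a : A, 0 ≤ a → 0 ≤ (α • T - S) a) :
    S = T :=
  stmt_14_general hsmulB harchB eA eB heBpos heBwou T hTpos hTe hlat S hSpos hSe α hdiff
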